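/- arXiv:1411.5876 — 2 statements merged into one kernel-verified Lean document; each statement's English description precedes it below -/
import Mathlib

section
/- Let N,m ≥ 1 and let A_1,...,A_m be N×N symmetric, idempotent, pairwise commuting row-stochastic matrices with nonnegative entries. For k ∈ [m] and i ∈ [N] define P_k(i) = {j ∈ [N] : (A_k A_{k-1} ⋯ A_1)^{ij} > 0}. Then for all i,j ∈ [N] and k ∈ [m]: (i) i ∈ P_k(j) if and only if j ∈ P_k(i); (ii) if j ∈ P_k(i) then P_k(i) = P_k(j), and if j ∉ P_k(i) then P_k(i) ∩ P_k(j) = ∅. -/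
open Matrix BigOperators

/-- The reversed partial product A_k A_{k-1} ⋯ A_1. -/
noncomputable def revProd {N : ℕ} (A : ℕ → Matrix (Fin N) (Fin N) ℝ) (k : ℕ) :
    Matrix (Fin N) (Fin N) ℝ :=
  ((List.range k).map (fun t => A (k - t))).prod

/-- The set of column indices of positive entries in row i of A_k ⋯ A_1. -/
def Pset {N : ℕ} (A : ℕ → Matrix (Fin N) (Fin N) ℝ) (k : ℕ) (i : Fin N) : Set (Fin N) :=
  {j | 0 < revProd A k i j}

lemma revProd_zero {N : ℕ} (A : ℕ → Matrix (Fin N) (Fin N) ℝ) :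
    revProd A 0 = 1 := by simp [revProd]

lemma revProd_succ {N : ℕ} (A : ℕ → Matrix (Fin N) (Fin N) ℝ) (k : ℕ) :
    revProd A (k+1) = A (k+1) * revProd A k := by
  unfold revProd
  rw [List.range_succ_eq_map, List.map_cons, List.map_map, List.prod_cons]
  congr 1
  congr 1
  apply List.map_congr_left
  intro t _
  simp [Function.comp, Nat.succ_sub_succ]

section Helpers

variable {N m : ℕ} (A : ℕ → Matrix (Fin N) (Fin N) ℝ)

lemma revProd_nonneg (hnonneg : ∀ k ∈ Finset.Icc 1 m, ∀ i j, 0 ≤ A k i j) :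
    ∀ k, k ≤ m → ∀ i j, 0 ≤ revProd A k i j := by
  intro k
  induction k with
  | zero =>
      intro _ i j
      rw [revProd_zero]
      by_cases h : i = j <;> simp [Matrix.one_apply, h]
  | succ n ih =>
      intro hk i j
      rw [revProd_succ, Matrix.mul_apply]
      apply Finset.sum_nonneg
      intro l _
      exact mul_nonneg (hnonneg (n+1) (Finset.mem_Icc.mpr ⟨Nat.succ_le_succ (Nat.zero_le _), hk⟩) i l)
        (ih (Nat.le_of_succ_le hk) l j)

lemma revProd_comm (hcomm : ∀ p ∈ Finset.Icc 1 m, ∀ q ∈ Finset.Icc 1 m, A p * A q = A q * A p)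
    (p : ℕ) (hp : p ∈ Finset.Icc 1 m) :
    ∀ k, k ≤ m → A p * revProd A k = revProd A k * A p := by
  intro k
  induction k with
  | zero => intro _; rw [revProd_zero, mul_one, one_mul]
  | succ n ih =>
      intro hk
      rw [revProd_succ, ← mul_assoc,
        hcomm p hp (n+1) (Finset.mem_Icc.mpr ⟨Nat.succ_le_succ (Nat.zero_le _), hk⟩),
        mul_assoc, ih (Nat.le_of_succ_le hk), ← mul_assoc]

lemma revProd_symm (hsym : ∀ k ∈ Finset.Icc 1 m, (A k)ᵀ = A k)
    (hcomm : ∀ p ∈ Finset.Icc 1 m, ∀ q ∈ Finset.Icc 1 m, A p * A q = A q * A p) :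
    ∀ k, k ≤ m → (revProd A k)ᵀ = revProd A k := by
  intro k
  induction k with
  | zero => rw [revProd_zero]; intro _; exact Matrix.transpose_one
  | succ n ih =>
      intro hk
      have hmem : n + 1 ∈ Finset.Icc 1 m := Finset.mem_Icc.mpr ⟨Nat.succ_le_succ (Nat.zero_le _), hk⟩
      rw [revProd_succ, Matrix.transpose_mul, ih (Nat.le_of_succ_le hk), hsym _ hmem]
      exact (revProd_comm A hcomm (n+1) hmem n (Nat.le_of_succ_le hk)).symm

lemma revProd_idem (hidem : ∀ k ∈ Finset.Icc 1 m, A k * A k = A k)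
    (hcomm : ∀ p ∈ Finset.Icc 1 m, ∀ q ∈ Finset.Icc 1 m, A p * A q = A q * A p) :
    ∀ k, k ≤ m → revProd A k * revProd A k = revProd A k := by
  intro k
  induction k with
  | zero => intro _; rw [revProd_zero, one_mul]
  | succ n ih =>
      intro hk
      have hn : n ≤ m := Nat.le_of_succ_le hk
      have hmem : n + 1 ∈ Finset.Icc 1 m := Finset.mem_Icc.mpr ⟨Nat.succ_le_succ (Nat.zero_le _), hk⟩
      rw [revProd_succ]
      calc A (n+1) * revProd A n * (A (n+1) * revProd A n)
          = A (n+1) * (revProd A n * A (n+1)) * revProd A n := by simp [mul_assoc]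
        _ = A (n+1) * (A (n+1) * revProd A n) * revProd A n := by
              rw [revProd_comm A hcomm (n+1) hmem n hn]
        _ = (A (n+1) * A (n+1)) * (revProd A n * revProd A n) := by simp [mul_assoc]
        _ = A (n+1) * revProd A n := by rw [hidem _ hmem, ih hn]

end Helpers

/-- For symmetric, idempotent, pairwise commuting row-stochastic nonnegative matrices,
the positivity sets P_k(i) of the products A_k ⋯ A_1 satisfy symmetry and are equivalence
classes: if j ∈ P_k(i) then P_k(i) = P_k(j), otherwise P_k(i) ∩ P_k(j) = ∅. -/
theorem Pset_symm_and_classes (N m : ℕ) (hN : 1 ≤ N) (hm : 1 ≤ m)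
    (A : ℕ → Matrix (Fin N) (Fin N) ℝ)
    (hsym : ∀ k ∈ Finset.Icc 1 m, (A k)ᵀ = A k)
    (hidem : ∀ k ∈ Finset.Icc 1 m, A k * A k = A k)
    (hcomm : ∀ p ∈ Finset.Icc 1 m, ∀ q ∈ Finset.Icc 1 m, A p * A q = A q * A p)
    (hnonneg : ∀ k ∈ Finset.Icc 1 m, ∀ i j, 0 ≤ A k i j)
    (hrow : ∀ k ∈ Finset.Icc 1 m, ∀ i, ∑ j, A k i j = 1) :
    ∀ k ∈ Finset.Icc 1 m, ∀ i j : Fin N,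
      (i ∈ Pset A k j ↔ j ∈ Pset A k i) ∧
      (j ∈ Pset A k i → Pset A k i = Pset A k j) ∧
      (j ∉ Pset A k i → Pset A k i ∩ Pset A k j = ∅) := by
  intro k hk i j
  have hkm : k ≤ m := (Finset.mem_Icc.mp hk).2
  set B := revProd A k with hB
  have hBnn : ∀ p q, 0 ≤ B p q := revProd_nonneg A hnonneg k hkm
  have hBsym : ∀ p q, B p q = B q p := by
    intro p q
    have := revProd_symm A hsym hcomm k hkm
    calc B p q = Bᵀ q p := rfl
      _ = B q p := by rw [this]
  have hBidem : ∀ p q, B p q = ∑ l, B p l * B l q := by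
    intro p q
    have h2 := revProd_idem A hidem hcomm k hkm
    rw [← hB] at h2
    conv_lhs => rw [← h2]
    rw [Matrix.mul_apply]
  -- key transitivity: B p q > 0 → B q r > 0 → B p r > 0
  have htrans : ∀ p q r : Fin N, 0 < B p q → 0 < B q r → 0 < B p r := by
    intro p q r h1 h2
    have hle : B p q * B q r ≤ ∑ l, B p l * B l r := by
      apply Finset.single_le_sum (f := fun l => B p l * B l r)
        (fun l _ => mul_nonneg (hBnn p l) (hBnn l r)) (Finset.mem_univ q)
    rw [← hBidem] at hle
    exact lt_of_lt_of_le (mul_pos h1 h2) hle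
  have hmem : ∀ p q : Fin N, q ∈ Pset A k p ↔ 0 < B p q := fun p q => Iff.rfl
  refine ⟨?_, ?_, ?_⟩
  · constructor <;> intro h <;> · rw [hmem] at h ⊢; rw [hBsym]; exact h
  · intro h
    rw [hmem] at h
    ext l
    rw [hmem, hmem]
    constructor
    · intro hl
      exact htrans j i l (by rw [hBsym]; exact h) hl
    · intro hl
      exact htrans i j l h hl
  · intro h
    rw [hmem] at h
    ext l
    simp only [Set.mem_inter_iff, Set.mem_empty_iff_false, iff_false]
    rintro ⟨h1, h2⟩
    rw [hmem] at h1 h2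
    exact h (htrans i l j h1 (by rw [hBsym]; exact h2))
end

section
/- Fix r ≥ 2, m ≥ 1, and let A_k = I_{r^{m-k}} ⊗ 𝟙_{1/r} ⊗ I_{r^{k-1}} for k ∈ [m]. For i ∈ [r^m] and k ∈ [m], define D_k(i) = {j ∈ [r^m] : (A_k A_{k-1} ⋯ A_1)^{ij} > 0}. Then D_k(i) = { r^k·⌊(i-1)/r^k⌋ + q : q ∈ [r^k] }, so |D_k(i)| = r^k. -/
open Matrix BigOperators

/-- Kronecker product of square matrices, with blocks of `A ⊗ B` given by `A^{pq} • B`,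
reindexed to `Fin (M * N)`. -/
noncomputable def kron {M N : ℕ} (A : Matrix (Fin M) (Fin M) ℝ) (B : Matrix (Fin N) (Fin N) ℝ) :
    Matrix (Fin (M * N)) (Fin (M * N)) ℝ :=
  Matrix.reindex finProdFinEquiv finProdFinEquiv (Matrix.kroneckerMap (· * ·) A B)

/-- The n×n matrix with every entry equal to 1/n. -/
noncomputable def onesMat (n : ℕ) : Matrix (Fin n) (Fin n) ℝ := fun _ _ => 1 / (n : ℝ)


lemma sizeEq (r m : ℕ) (k : Fin m) : r ^ (m - 1 - k.1) * (r * r ^ k.1) = r ^ m := by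
  have hk : k.1 < m := k.isLt
  rw [← pow_succ', ← pow_add]
  congr 1
  omega

/-- The radix-r butterfly matrix `A_k = I_{r^(m-k)} ⊗ 𝟙_{1/r} ⊗ I_{r^(k-1)}`, where the
1-based index `k ∈ [m]` is represented by the 0-based `k : Fin m` (so `k.1 = k - 1`). -/
noncomputable def Ak (r m : ℕ) (k : Fin m) : Matrix (Fin (r ^ m)) (Fin (r ^ m)) ℝ :=
  Matrix.reindex (finCongr (sizeEq r m k)) (finCongr (sizeEq r m k))
    (kron (1 : Matrix (Fin (r ^ (m - 1 - k.1))) (Fin (r ^ (m - 1 - k.1))) ℝ)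
      (kron (onesMat r) (1 : Matrix (Fin (r ^ k.1)) (Fin (r ^ k.1)) ℝ)))

/-!
`A_{t+1}` averages, inside each block of `r^(t+1)` consecutive indices, the `r` indices that agree
modulo `r^t`. By induction, `A_k ⋯ A_1` has entry `r^(-k)` at `(i, j)` when `i / r^k = j / r^k`
and `0` otherwise: in the product `A_{k+1} * (A_k ⋯ A_1)` the only intermediate index is the
element of the `r^k`-block of `j` congruent to `i` modulo `r^k`, and it exists exactly when `i`
and `j` share an `r^(k+1)`-block. So `D_k(i)` is the `r^k`-block of `i`.
-/

namespace Nat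

theorem div_eq_div_iff_exists_lt {b i j : ℕ} (hb : 0 < b) :
    i / b = j / b ↔ ∃ q < b, j = b * (i / b) + q := by
  constructor
  · intro h
    exact ⟨j % b, mod_lt j hb, by rw [h, div_add_mod]⟩
  · rintro ⟨q, hq, rfl⟩
    rw [mul_add_div hb, div_eq_of_lt hq, add_zero]

theorem mul_div_add_lt_of_dvd {b n i q : ℕ} (hbn : b ∣ n) (hi : i < n) (hq : q < b) :
    b * (i / b) + q < n := by
  obtain ⟨c, rfl⟩ := hbn
  have hic : i / b + 1 ≤ c := Nat.div_lt_of_lt_mul hi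
  calc b * (i / b) + q < b * (i / b + 1) := by rw [mul_add_one]; omega
    _ ≤ b * c := Nat.mul_le_mul_left b hic

-- The intermediate index `l` of an `(i, j)` entry of `A_{k+1} * (A_k ⋯ A_1)`, with `b = r ^ k`.
theorem div_mul_eq_and_mod_eq_and_div_eq_iff {r b i j l : ℕ} (hb : 0 < b) :
    ((i / (r * b) = l / (r * b) ∧ i % b = l % b) ∧ l / b = j / b) ↔
      l = b * (j / b) + i % b ∧ i / (r * b) = j / (r * b) := by
  have hdiv (a : ℕ) : a / (r * b) = a / b / r := by rw [Nat.div_div_eq_div_mul, mul_comm]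
  simp only [hdiv]
  constructor
  · rintro ⟨⟨hil, hmod⟩, hlj⟩
    refine ⟨?_, by rw [hil, hlj]⟩
    rw [← hlj, hmod, div_add_mod]
  · rintro ⟨rfl, hij⟩
    have hlj : (b * (j / b) + i % b) / b = j / b := by
      rw [mul_add_div hb, div_eq_of_lt (mod_lt i hb), add_zero]
    refine ⟨⟨by rw [hlj, hij], by rw [mul_add_mod, mod_mod]⟩, hlj⟩

end Nat

theorem Fin.ncard_setOf_div_eq {n b : ℕ} (hb : 0 < b) (hbn : b ∣ n) (i : Fin n) :
    {j : Fin n | (i : ℕ) / b = (j : ℕ) / b}.ncard = b := by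
  let f : Fin b → Fin n := fun q => ⟨b * (i / b) + q, Nat.mul_div_add_lt_of_dvd hbn i.2 q.2⟩
  have hf : Function.Injective f := fun p q hpq => Fin.ext (by simpa [f] using hpq)
  have hrange : Set.range f = {j : Fin n | (i : ℕ) / b = (j : ℕ) / b} := by
    ext j
    simp only [Set.mem_range, Set.mem_ofPred_eq, Nat.div_eq_div_iff_exists_lt hb, f, Fin.ext_iff]
    exact ⟨fun ⟨q, hq⟩ => ⟨q, q.2, hq.symm⟩, fun ⟨q, hq, hj⟩ => ⟨⟨q, hq⟩, hj.symm⟩⟩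
  rw [← hrange, Set.ncard_range_of_injective hf, Nat.card_eq_fintype_card, Fintype.card_fin]

theorem kron_apply {M N : ℕ} (A : Matrix (Fin M) (Fin M) ℝ) (B : Matrix (Fin N) (Fin N) ℝ)
    (i j : Fin (M * N)) : kron A B i j = A i.divNat j.divNat * B i.modNat j.modNat := rfl

theorem Ak_apply (r m : ℕ) (t : Fin m) (i j : Fin (r ^ m)) :
    Ak r m t i j =
      if (i : ℕ) / (r * r ^ t.1) = (j : ℕ) / (r * r ^ t.1) ∧
         (i : ℕ) % r ^ t.1 = (j : ℕ) % r ^ t.1 then (1 / r : ℝ) else 0 := by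
  have hdvd : r ^ t.1 ∣ r * r ^ t.1 := dvd_mul_left _ _
  simp only [Ak, Matrix.reindex_apply, Matrix.submatrix_apply, kron_apply,
    Matrix.one_apply, onesMat, Fin.ext_iff, Fin.coe_divNat, Fin.coe_modNat, finCongr_symm,
    finCongr_apply, Fin.val_cast, Nat.mod_mod_of_dvd _ hdvd]
  split_ifs <;> simp_all

theorem butterfly_prod_apply {r m : ℕ} (hr : 0 < r) {k : ℕ} (hk : k ≤ m) (i j : Fin (r ^ m)) :
    (List.ofFn (fun t : Fin k => Ak r m (Fin.castLE hk t))).reverse.prod i j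
      = if (i : ℕ) / r ^ k = (j : ℕ) / r ^ k then (1 / r : ℝ) ^ k else 0 := by
  induction k generalizing i j with
  | zero => simp [Matrix.one_apply, Fin.ext_iff]
  | succ k ih =>
    have hrk : 0 < r ^ k := pow_pos hr k
    rw [List.ofFn_succ', List.concat_eq_append, List.reverse_append, List.reverse_singleton,
      List.singleton_append, List.prod_cons, Matrix.mul_apply, pow_succ']
    simp only [Fin.castLE_castSucc, ih (Nat.le_of_succ_le hk), Ak_apply, Fin.val_castLE,
      Fin.val_last, ite_zero_mul_ite_zero, Nat.div_mul_eq_and_mod_eq_and_div_eq_iff hrk]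
    by_cases hij : (i : ℕ) / (r * r ^ k) = (j : ℕ) / (r * r ^ k)
    · let l : Fin (r ^ m) := ⟨r ^ k * (j / r ^ k) + i % r ^ k,
        Nat.mul_div_add_lt_of_dvd (pow_dvd_pow r (by omega)) j.2 (Nat.mod_lt i hrk)⟩
      have hl (x : Fin (r ^ m)) : (x : ℕ) = r ^ k * (j / r ^ k) + i % r ^ k ↔ x = l :=
        Fin.val_inj (a := x) (b := l)
      simp only [hij, and_true, hl, Finset.sum_ite_eq', Finset.mem_univ, if_true]
      ring
    · simp [hij]

theorem butterfly_support {r m : ℕ} (hr : 0 < r) {k : ℕ} (hk : k ≤ m) (i : Fin (r ^ m)) :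
    {j : Fin (r ^ m) |
        0 < (List.ofFn (fun t : Fin k => Ak r m (Fin.castLE hk t))).reverse.prod i j}
      = {j : Fin (r ^ m) | (i : ℕ) / r ^ k = (j : ℕ) / r ^ k} := by
  ext j
  have hpos : (0 : ℝ) < (1 / r) ^ k := by positivity
  simp only [Set.mem_ofPred_eq, butterfly_prod_apply hr hk]
  split_ifs with hij
  · exact iff_of_true hpos hij
  · exact iff_of_false (lt_irrefl 0) hij

theorem butterfly_reach_set_general (r m : ℕ) (hr : 2 ≤ r) (k : ℕ) (hk2 : k ≤ m)
    (i : Fin (r ^ m)) :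
    {j : Fin (r ^ m) |
        0 < ((List.ofFn (fun t : Fin k => Ak r m (Fin.castLE hk2 t))).reverse.prod) i j}
      = {j : Fin (r ^ m) | ∃ q ∈ Finset.Icc 1 (r ^ k),
          (j : ℕ) = r ^ k * ((i : ℕ) / r ^ k) + (q - 1)}
    ∧ Set.ncard {j : Fin (r ^ m) |
        0 < ((List.ofFn (fun t : Fin k => Ak r m (Fin.castLE hk2 t))).reverse.prod) i j}
      = r ^ k := by
  have hrk : 0 < r ^ k := pow_pos (by omega) k
  rw [butterfly_support (by omega) hk2]
  refine ⟨?_, Fin.ncard_setOf_div_eq hrk (pow_dvd_pow r hk2) i⟩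
  ext j
  simp only [Set.mem_ofPred_eq, Nat.div_eq_div_iff_exists_lt hrk, Finset.mem_Icc]
  constructor
  · rintro ⟨q, hq, hj⟩
    exact ⟨q + 1, ⟨by omega, hq⟩, hj⟩
  · rintro ⟨q, ⟨hq1, hq⟩, hj⟩
    exact ⟨q - 1, by omega, hj⟩

/-- The support of row i of the product A_k ⋯ A_1 (0-based indices):
D_k(i) = { r^k ⌊i / r^k⌋ + (q-1) : q ∈ [r^k] }, of cardinality r^k. -/
theorem butterfly_reach_set (r m : ℕ) (hr : 2 ≤ r) (k : ℕ) (hk1 : 1 ≤ k) (hk2 : k ≤ m)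
    (i : Fin (r ^ m)) :
    {j : Fin (r ^ m) |
        0 < ((List.ofFn (fun t : Fin k => Ak r m (Fin.castLE hk2 t))).reverse.prod) i j}
      = {j : Fin (r ^ m) | ∃ q ∈ Finset.Icc 1 (r ^ k),
          (j : ℕ) = r ^ k * ((i : ℕ) / r ^ k) + (q - 1)}
    ∧ Set.ncard {j : Fin (r ^ m) |
        0 < ((List.ofFn (fun t : Fin k => Ak r m (Fin.castLE hk2 t))).reverse.prod) i j}
      = r ^ k :=
  butterfly_reach_set_general r m hr k hk2 i
end
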